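/- The subgroup of the symmetric group on the 48 facelets generated by the twelve restricted permutations u_e, l_e, f_e, r_e, b_e, d_e (acting on edge facelets and fixing corner facelets) and u_c, l_c, f_c, r_c, b_c, d_c (acting on corner facelets and fixing edge facelets) is the internal direct product of the edge group and the corner group, it has order exactly twice the order of the Rubik's cube group, and the Rubik's cube group is a subgroup of index 2 in it. -/

import Mathlib

open Equiv

def Umove : Perm (Fin 48) :=
  c[0, 1, 3, 7] * c[5, 10, 16, 21] * c[24, 25, 28, 35] * c[26, 30, 37, 44] * c[32, 39, 45, 43]

def Lmove : Perm (Fin 48) :=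
  c[5, 11, 19, 2] * c[7, 14, 13, 18] * c[30, 39, 46, 27] * c[24, 26, 31, 41] * c[35, 34, 40, 45]

def Fmove : Perm (Fin 48) :=
  c[21, 17, 22, 14] * c[3, 8, 15, 11] * c[26, 32, 42, 34] * c[28, 36, 31, 39] * c[35, 44, 38, 46]

def Rmove : Perm (Fin 48) :=
  c[16, 12, 20, 8] * c[1, 4, 9, 17] * c[44, 43, 47, 36] * c[25, 29, 38, 32] * c[28, 37, 33, 42]

def Bmove : Perm (Fin 48) :=
  c[10, 18, 23, 4] * c[0, 2, 6, 12] * c[37, 45, 41, 29] * c[24, 27, 33, 43] * c[25, 30, 40, 47]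

def Dmove : Perm (Fin 48) :=
  c[15, 9, 6, 13] * c[22, 20, 23, 19] * c[31, 38, 33, 40] * c[34, 36, 29, 27] * c[42, 47, 41, 46]

/-- The Rubik's cube group: the subgroup of the symmetric group on the 48 facelets
generated by the six clockwise quarter-turn face moves. -/
def cubeGroup : Subgroup (Perm (Fin 48)) :=
  Subgroup.closure {Umove, Lmove, Fmove, Rmove, Bmove, Dmove}

/-- The six face moves together with their inverses. -/
def cubeGens : Set (Perm (Fin 48)) :=
  {Umove, Lmove, Fmove, Rmove, Bmove, Dmove,
   Umove⁻¹, Lmove⁻¹, Fmove⁻¹, Rmove⁻¹, Bmove⁻¹, Dmove⁻¹}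
set_option maxRecDepth 100000
def uEdge : Perm {x : Fin 48 // (x : ℕ) < 24} := Umove.subtypePerm (by decide)
def lEdge : Perm {x : Fin 48 // (x : ℕ) < 24} := Lmove.subtypePerm (by decide)
def fEdge : Perm {x : Fin 48 // (x : ℕ) < 24} := Fmove.subtypePerm (by decide)
def rEdge : Perm {x : Fin 48 // (x : ℕ) < 24} := Rmove.subtypePerm (by decide)
def bEdge : Perm {x : Fin 48 // (x : ℕ) < 24} := Bmove.subtypePerm (by decide)
def dEdge : Perm {x : Fin 48 // (x : ℕ) < 24} := Dmove.subtypePerm (by decide)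

/-- The edge group `R_e`, generated by the restrictions of the six face moves
to the edge facelets. -/
def edgeGroup : Subgroup (Perm {x : Fin 48 // (x : ℕ) < 24}) :=
  Subgroup.closure {uEdge, lEdge, fEdge, rEdge, bEdge, dEdge}
def uCorner : Perm {x : Fin 48 // 24 ≤ (x : ℕ)} := Umove.subtypePerm (by decide)
def lCorner : Perm {x : Fin 48 // 24 ≤ (x : ℕ)} := Lmove.subtypePerm (by decide)
def fCorner : Perm {x : Fin 48 // 24 ≤ (x : ℕ)} := Fmove.subtypePerm (by decide)
def rCorner : Perm {x : Fin 48 // 24 ≤ (x : ℕ)} := Rmove.subtypePerm (by decide)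
def bCorner : Perm {x : Fin 48 // 24 ≤ (x : ℕ)} := Bmove.subtypePerm (by decide)
def dCorner : Perm {x : Fin 48 // 24 ≤ (x : ℕ)} := Dmove.subtypePerm (by decide)

/-- The corner group `R_c`, generated by the restrictions of the six face moves
to the corner facelets. -/
def cornerGroup : Subgroup (Perm {x : Fin 48 // 24 ≤ (x : ℕ)}) :=
  Subgroup.closure {uCorner, lCorner, fCorner, rCorner, bCorner, dCorner}

/-- The edge group extended to act on all 48 facelets, fixing the corner facelets pointwise. -/
def edgeGroupExt : Subgroup (Perm (Fin 48)) :=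
  edgeGroup.map Perm.ofSubtype

/-- The corner group extended to act on all 48 facelets, fixing the edge facelets pointwise. -/
def cornerGroupExt : Subgroup (Perm (Fin 48)) :=
  cornerGroup.map Perm.ofSubtype

/-- The group generated by the twelve restricted permutations
`u_e, …, d_e` (extended by the identity on corners) and `u_c, …, d_c`
(extended by the identity on edges). -/
def bigGroup : Subgroup (Perm (Fin 48)) :=
  Subgroup.closure
    {Perm.ofSubtype uEdge, Perm.ofSubtype lEdge, Perm.ofSubtype fEdge,
     Perm.ofSubtype rEdge, Perm.ofSubtype bEdge, Perm.ofSubtype dEdge,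
     Perm.ofSubtype uCorner, Perm.ofSubtype lCorner, Perm.ofSubtype fCorner,
     Perm.ofSubtype rCorner, Perm.ofSubtype bCorner, Perm.ofSubtype dCorner}

/-!
Every face move is the commuting product `X = x_e * x_c` of its edge and corner parts, so the
cube group `G` lies in the group `H` generated by all the parts, and `H = R_e × R_c`.
Put `t = u_e`. A face move permutes the 20 cubies evenly (a 4-cycle of edge cubies times a
4-cycle of corner cubies), whereas `t` is a single 4-cycle of edge cubies, so `t ∉ G`.
Conversely, for adjacent faces `X, Y` the edge part of `X * Y` has order 7 and its corner part
order 15, so `(X * Y) ^ 15 = x_e * y_e ∈ G`. Such products give `t * t ∈ G` and `x_e * t ∈ G`,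
`t * x_e ∈ G` for every face; as `t` commutes with every corner part, `t` normalises `G`, and
all generators of `H` lie in `G ∪ G t`. Thus `H = G ∪ G t` and `[H : G] = 2`.
-/

open Function Perm

namespace Equiv.Perm

variable {α : Type*} {p q : α → Prop} [DecidablePred p] [DecidablePred q]

theorem ofSubtype_commute_of_disjoint (hpq : ∀ a, p a → ¬q a) (σ : Perm (Subtype p))
    (τ : Perm (Subtype q)) : Commute (ofSubtype σ) (ofSubtype τ) :=
  Disjoint.commute fun a => by
    by_cases ha : p a
    · exact Or.inr (ofSubtype_apply_of_not_mem τ (hpq a ha))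
    · exact Or.inl (ofSubtype_apply_of_not_mem σ ha)

theorem range_ofSubtype_inf_eq_bot (hpq : ∀ a, p a → ¬q a) :
    (ofSubtype : Perm (Subtype p) →* Perm α).range ⊓
      (ofSubtype : Perm (Subtype q) →* Perm α).range = ⊥ := by
  refine eq_bot_iff.mpr fun g hg => ?_
  obtain ⟨⟨σ, rfl⟩, ⟨τ, hτ⟩⟩ := Subgroup.mem_inf.mp hg
  refine Subgroup.mem_bot.mpr (Equiv.ext fun a => ?_)
  by_cases ha : p a
  · rw [one_apply, ← hτ]
    exact ofSubtype_apply_of_not_mem τ (hpq a ha)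
  · exact ofSubtype_apply_of_not_mem σ ha

end Equiv.Perm

def semiconjSubgroup {α β : Type*} (f : α → β) (K : Subgroup (Perm β)) : Subgroup (Perm α) where
  carrier := {σ | ∃ τ ∈ K, Semiconj f σ τ}
  one_mem' := ⟨1, K.one_mem, Semiconj.id_right⟩
  mul_mem' := fun ⟨τ, hτ, h⟩ ⟨τ', hτ', h'⟩ => ⟨τ * τ', K.mul_mem hτ hτ', h.comp_right h'⟩
  inv_mem' := fun {σ} ⟨τ, hτ, h⟩ =>
    ⟨τ⁻¹, K.inv_mem hτ, h.inverses_right σ.right_inv' τ.left_inv'⟩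

theorem notMem_semiconjSubgroup {α β : Type*} {f : α → β} {K : Subgroup (Perm β)}
    {σ : Perm α} {τ : Perm β} (hf : Surjective f) (hσ : Semiconj f σ τ) (hτ : τ ∉ K) :
    σ ∉ semiconjSubgroup f K := by
  rintro ⟨τ', hτ', hσ'⟩
  have hττ' : τ' = τ := Equiv.ext fun b => by
    obtain ⟨a, rfl⟩ := hf b
    exact (hσ' a).symm.trans (hσ a)
  exact hτ (hττ' ▸ hτ')

namespace Subgroup

variable {M : Type*} [Group M]

def unionCoset (G : Subgroup M) (t : M) (hsq : t * t ∈ G) (hconj : ∀ g ∈ G, t⁻¹ * g * t ∈ G) :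
    Subgroup M where
  carrier := {h | h ∈ G ∨ h * t ∈ G}
  one_mem' := Or.inl G.one_mem
  mul_mem' := by
    rintro a b (ha | ha) (hb | hb)
    · exact Or.inl (G.mul_mem ha hb)
    · exact Or.inr (by simpa only [mul_assoc] using G.mul_mem ha hb)
    · refine Or.inr ?_
      have := G.mul_mem ha (hconj b hb)
      rwa [show a * t * (t⁻¹ * b * t) = a * b * t by group] at this
    · refine Or.inl ?_
      have := G.mul_mem (G.mul_mem ha (hconj _ hb)) (G.inv_mem hsq)
      rwa [show a * t * (t⁻¹ * (b * t) * t) * (t * t)⁻¹ = a * b by group] at this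
  inv_mem' := by
    rintro a (ha | ha)
    · exact Or.inl (G.inv_mem ha)
    · refine Or.inr ?_
      have := G.mul_mem hsq (hconj _ (G.inv_mem ha))
      rwa [show t * t * (t⁻¹ * (a * t)⁻¹ * t) = a⁻¹ * t by group] at this

theorem conj_mul_mem {G : Subgroup M} {t e c : M} (hec : e * c ∈ G) (htt : t * t ∈ G)
    (het : e * t ∈ G) (hte : t * e ∈ G) (htc : Commute t c) : t⁻¹ * (e * c) * t ∈ G := by
  have key : t⁻¹ * (e * c) * t = (t * t)⁻¹ * (t * e) * (t * t) * (e * t)⁻¹ * (e * c) := by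
    calc t⁻¹ * (e * c) * t = t⁻¹ * e * (c * t) := by group
      _ = t⁻¹ * e * (t * c) := by rw [htc.eq]
      _ = _ := by group
  rw [key]
  exact G.mul_mem (G.mul_mem (G.mul_mem (G.mul_mem (G.inv_mem htt) hte) htt) (G.inv_mem het)) hec

end Subgroup

theorem Umove_mem : Umove ∈ cubeGroup := Subgroup.subset_closure (by simp)
theorem Lmove_mem : Lmove ∈ cubeGroup := Subgroup.subset_closure (by simp)
theorem Fmove_mem : Fmove ∈ cubeGroup := Subgroup.subset_closure (by simp)
theorem Rmove_mem : Rmove ∈ cubeGroup := Subgroup.subset_closure (by simp)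
theorem Bmove_mem : Bmove ∈ cubeGroup := Subgroup.subset_closure (by simp)
theorem Dmove_mem : Dmove ∈ cubeGroup := Subgroup.subset_closure (by simp)

theorem Umove_eq_edge_mul_corner : Umove = ofSubtype uEdge * ofSubtype uCorner := by decide
theorem Lmove_eq_edge_mul_corner : Lmove = ofSubtype lEdge * ofSubtype lCorner := by decide
theorem Fmove_eq_edge_mul_corner : Fmove = ofSubtype fEdge * ofSubtype fCorner := by decide
theorem Rmove_eq_edge_mul_corner : Rmove = ofSubtype rEdge * ofSubtype rCorner := by decide
theorem Bmove_eq_edge_mul_corner : Bmove = ofSubtype bEdge * ofSubtype bCorner := by decide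
theorem Dmove_eq_edge_mul_corner : Dmove = ofSubtype dEdge * ofSubtype dCorner := by decide

theorem edge_commute_corner (σ : Perm {x : Fin 48 // (x : ℕ) < 24})
    (τ : Perm {x : Fin 48 // 24 ≤ (x : ℕ)}) : Commute (ofSubtype σ) (ofSubtype τ) :=
  ofSubtype_commute_of_disjoint (fun _ => Nat.not_le_of_lt) σ τ

theorem cubeGroup_le_bigGroup : cubeGroup ≤ bigGroup := by
  refine (Subgroup.closure_le _).mpr ?_
  simp only [Set.insert_subset_iff, Set.singleton_subset_iff, SetLike.mem_coe]
  rw [Umove_eq_edge_mul_corner, Lmove_eq_edge_mul_corner, Fmove_eq_edge_mul_corner,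
    Rmove_eq_edge_mul_corner, Bmove_eq_edge_mul_corner, Dmove_eq_edge_mul_corner]
  refine ⟨?_, ?_, ?_, ?_, ?_, ?_⟩ <;>
    exact mul_mem (Subgroup.subset_closure (by simp)) (Subgroup.subset_closure (by simp))

theorem bigGroup_eq_sup : bigGroup = edgeGroupExt ⊔ cornerGroupExt := by
  rw [edgeGroupExt, cornerGroupExt, edgeGroup, cornerGroup, MonoidHom.map_closure,
    MonoidHom.map_closure, ← Subgroup.closure_union, bigGroup]
  simp only [Set.image_insert_eq, Set.image_singleton, Set.insert_union, Set.singleton_union]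

/-- The cubie carrying each facelet: edge cubies are numbered 0–11, corner cubies 12–19. -/
def cubie : Fin 48 → Fin 20 :=
  ![0, 1, 2, 3, 4, 5, 6, 5, 7, 8, 0, 9, 4, 10, 9, 11, 1, 7, 2, 10, 8, 3, 11, 6,
    12, 13, 14, 15, 16, 17, 12, 18, 16, 17, 18, 14, 19, 13, 19, 14, 15, 15, 19, 13, 16, 12, 18, 17]

theorem cubie_surjective : Surjective cubie := by decide

theorem cubeGroup_le_semiconjSubgroup_cubie :
    cubeGroup ≤ semiconjSubgroup cubie (alternatingGroup (Fin 20)) := by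
  refine (Subgroup.closure_le _).mpr ?_
  simp only [Set.insert_subset_iff, Set.singleton_subset_iff, SetLike.mem_coe]
  refine ⟨⟨c[0, 1, 3, 5] * c[12, 13, 16, 14], ?_⟩, ⟨c[2, 5, 9, 10] * c[12, 14, 18, 15], ?_⟩,
    ⟨c[3, 7, 11, 9] * c[14, 16, 19, 18], ?_⟩, ⟨c[1, 4, 8, 7] * c[13, 17, 19, 16], ?_⟩,
    ⟨c[0, 2, 6, 4] * c[12, 15, 17, 13], ?_⟩, ⟨c[6, 10, 11, 8] * c[15, 18, 19, 17], ?_⟩⟩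
  all_goals exact ⟨mem_alternatingGroup.mpr (by decide), fun x => by revert x; decide⟩

theorem uEdge_notMem_cubeGroup : ofSubtype uEdge ∉ cubeGroup := fun h =>
  notMem_semiconjSubgroup cubie_surjective (τ := c[0, 1, 3, 5]) (by intro x; revert x; decide)
    (by rw [mem_alternatingGroup]; decide) (cubeGroup_le_semiconjSubgroup_cubie h)

-- The face moves as lookup tables, which the kernel evaluates much faster than cycle notation.
noncomputable def Utable : Perm (Fin 48) :=
  .ofBijective
    ![1, 3, 2, 7, 4, 10, 6, 0, 8, 9, 16, 11, 12, 13, 14, 15,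
      21, 17, 18, 19, 20, 5, 22, 23, 25, 28, 30, 27, 35, 29, 37, 31,
      39, 33, 34, 24, 36, 44, 38, 45, 40, 41, 42, 32, 26, 43, 46, 47] (by decide)

noncomputable def Ltable : Perm (Fin 48) :=
  .ofBijective
    ![0, 1, 5, 3, 4, 11, 6, 14, 8, 9, 10, 19, 12, 18, 13, 15,
      16, 17, 7, 2, 20, 21, 22, 23, 26, 25, 31, 30, 28, 29, 39, 41,
      32, 33, 40, 34, 36, 37, 38, 46, 45, 24, 42, 43, 44, 35, 27, 47] (by decide)

noncomputable def Ftable : Perm (Fin 48) :=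
  .ofBijective
    ![0, 1, 2, 8, 4, 5, 6, 7, 15, 9, 10, 3, 12, 13, 21, 11,
      16, 22, 18, 19, 20, 17, 14, 23, 24, 25, 32, 27, 36, 29, 30, 39,
      42, 33, 26, 44, 31, 37, 46, 28, 40, 41, 34, 43, 38, 45, 35, 47] (by decide)

noncomputable def Rtable : Perm (Fin 48) :=
  .ofBijective
    ![0, 4, 2, 3, 9, 5, 6, 7, 16, 17, 10, 11, 20, 13, 14, 15,
      12, 1, 18, 19, 8, 21, 22, 23, 24, 29, 26, 27, 37, 38, 30, 31,
      25, 42, 34, 35, 44, 33, 32, 39, 40, 41, 28, 47, 43, 45, 46, 36] (by decide)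

noncomputable def Btable : Perm (Fin 48) :=
  .ofBijective
    ![2, 1, 6, 3, 10, 5, 12, 7, 8, 9, 18, 11, 0, 13, 14, 15,
      16, 17, 23, 19, 20, 21, 22, 4, 27, 30, 26, 33, 28, 37, 40, 31,
      32, 43, 34, 35, 36, 45, 38, 39, 47, 29, 42, 24, 44, 41, 46, 25] (by decide)

noncomputable def Dtable : Perm (Fin 48) :=
  .ofBijective
    ![0, 1, 2, 3, 4, 5, 13, 7, 8, 6, 10, 11, 12, 15, 14, 9,
      16, 17, 18, 22, 23, 21, 20, 19, 24, 25, 26, 34, 28, 27, 30, 38,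
      32, 40, 36, 35, 29, 37, 33, 39, 31, 46, 47, 43, 44, 45, 42, 41] (by decide)

theorem Utable_mem : Utable ∈ cubeGroup := (by decide : Umove = Utable) ▸ Umove_mem
theorem Ltable_mem : Ltable ∈ cubeGroup := (by decide : Lmove = Ltable) ▸ Lmove_mem
theorem Ftable_mem : Ftable ∈ cubeGroup := (by decide : Fmove = Ftable) ▸ Fmove_mem
theorem Rtable_mem : Rtable ∈ cubeGroup := (by decide : Rmove = Rtable) ▸ Rmove_mem
theorem Btable_mem : Btable ∈ cubeGroup := (by decide : Bmove = Btable) ▸ Bmove_mem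
theorem Dtable_mem : Dtable ∈ cubeGroup := (by decide : Dmove = Dtable) ▸ Dmove_mem

theorem lEdge_mul_uEdge_mem : ofSubtype lEdge * ofSubtype uEdge ∈ cubeGroup := by
  rw [show ofSubtype lEdge * ofSubtype uEdge = (Ltable * Utable) ^ 15 by decide +kernel]
  exact pow_mem (mul_mem Ltable_mem Utable_mem) 15

theorem uEdge_mul_lEdge_mem : ofSubtype uEdge * ofSubtype lEdge ∈ cubeGroup := by
  rw [show ofSubtype uEdge * ofSubtype lEdge = (Utable * Ltable) ^ 15 by decide +kernel]
  exact pow_mem (mul_mem Utable_mem Ltable_mem) 15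

theorem fEdge_mul_uEdge_mem : ofSubtype fEdge * ofSubtype uEdge ∈ cubeGroup := by
  rw [show ofSubtype fEdge * ofSubtype uEdge = (Ftable * Utable) ^ 15 by decide +kernel]
  exact pow_mem (mul_mem Ftable_mem Utable_mem) 15

theorem uEdge_mul_fEdge_mem : ofSubtype uEdge * ofSubtype fEdge ∈ cubeGroup := by
  rw [show ofSubtype uEdge * ofSubtype fEdge = (Utable * Ftable) ^ 15 by decide +kernel]
  exact pow_mem (mul_mem Utable_mem Ftable_mem) 15

theorem rEdge_mul_uEdge_mem : ofSubtype rEdge * ofSubtype uEdge ∈ cubeGroup := by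
  rw [show ofSubtype rEdge * ofSubtype uEdge = (Rtable * Utable) ^ 15 by decide +kernel]
  exact pow_mem (mul_mem Rtable_mem Utable_mem) 15

theorem uEdge_mul_rEdge_mem : ofSubtype uEdge * ofSubtype rEdge ∈ cubeGroup := by
  rw [show ofSubtype uEdge * ofSubtype rEdge = (Utable * Rtable) ^ 15 by decide +kernel]
  exact pow_mem (mul_mem Utable_mem Rtable_mem) 15

theorem bEdge_mul_uEdge_mem : ofSubtype bEdge * ofSubtype uEdge ∈ cubeGroup := by
  rw [show ofSubtype bEdge * ofSubtype uEdge = (Btable * Utable) ^ 15 by decide +kernel]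
  exact pow_mem (mul_mem Btable_mem Utable_mem) 15

theorem uEdge_mul_bEdge_mem : ofSubtype uEdge * ofSubtype bEdge ∈ cubeGroup := by
  rw [show ofSubtype uEdge * ofSubtype bEdge = (Utable * Btable) ^ 15 by decide +kernel]
  exact pow_mem (mul_mem Utable_mem Btable_mem) 15

theorem rEdge_mul_fEdge_mem : ofSubtype rEdge * ofSubtype fEdge ∈ cubeGroup := by
  rw [show ofSubtype rEdge * ofSubtype fEdge = (Rtable * Ftable) ^ 15 by decide +kernel]
  exact pow_mem (mul_mem Rtable_mem Ftable_mem) 15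

theorem dEdge_mul_fEdge_mem : ofSubtype dEdge * ofSubtype fEdge ∈ cubeGroup := by
  rw [show ofSubtype dEdge * ofSubtype fEdge = (Dtable * Ftable) ^ 15 by decide +kernel]
  exact pow_mem (mul_mem Dtable_mem Ftable_mem) 15

theorem uEdge_mul_uEdge_mem : ofSubtype uEdge * ofSubtype uEdge ∈ cubeGroup := by
  convert mul_mem (mul_mem uEdge_mul_fEdge_mem (inv_mem rEdge_mul_fEdge_mem))
    rEdge_mul_uEdge_mem using 1
  group

theorem dEdge_mul_uEdge_mem : ofSubtype dEdge * ofSubtype uEdge ∈ cubeGroup := by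
  convert mul_mem (mul_mem dEdge_mul_fEdge_mem (inv_mem uEdge_mul_fEdge_mem))
    uEdge_mul_uEdge_mem using 1
  group

theorem uEdge_mul_dEdge_mem : ofSubtype uEdge * ofSubtype dEdge ∈ cubeGroup := by
  rw [show ofSubtype uEdge * ofSubtype dEdge = ofSubtype dEdge * ofSubtype uEdge by decide]
  exact dEdge_mul_uEdge_mem

theorem conj_uEdge_mem_of_face {X : Perm (Fin 48)} {σ : Perm {x : Fin 48 // (x : ℕ) < 24}}
    {τ : Perm {x : Fin 48 // 24 ≤ (x : ℕ)}} (hX : X ∈ cubeGroup)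
    (hXστ : X = ofSubtype σ * ofSubtype τ) (hσu : ofSubtype σ * ofSubtype uEdge ∈ cubeGroup)
    (huσ : ofSubtype uEdge * ofSubtype σ ∈ cubeGroup) :
    (ofSubtype uEdge)⁻¹ * X * ofSubtype uEdge ∈ cubeGroup := by
  subst hXστ
  exact Subgroup.conj_mul_mem hX uEdge_mul_uEdge_mem hσu huσ (edge_commute_corner _ _)

theorem conj_uEdge_mem {g : Perm (Fin 48)} (hg : g ∈ cubeGroup) :
    (ofSubtype uEdge)⁻¹ * g * ofSubtype uEdge ∈ cubeGroup := by
  suffices cubeGroup ≤ cubeGroup.comap (MulAut.conj (ofSubtype uEdge)⁻¹).toMonoidHom by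
    simpa using this hg
  refine (Subgroup.closure_le _).mpr ?_
  simp only [Set.insert_subset_iff, Set.singleton_subset_iff, SetLike.mem_coe, Subgroup.mem_comap,
    MulEquiv.coe_toMonoidHom, MulAut.conj_apply, inv_inv]
  exact ⟨conj_uEdge_mem_of_face Umove_mem Umove_eq_edge_mul_corner uEdge_mul_uEdge_mem
      uEdge_mul_uEdge_mem,
    conj_uEdge_mem_of_face Lmove_mem Lmove_eq_edge_mul_corner lEdge_mul_uEdge_mem
      uEdge_mul_lEdge_mem,
    conj_uEdge_mem_of_face Fmove_mem Fmove_eq_edge_mul_corner fEdge_mul_uEdge_mem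
      uEdge_mul_fEdge_mem,
    conj_uEdge_mem_of_face Rmove_mem Rmove_eq_edge_mul_corner rEdge_mul_uEdge_mem
      uEdge_mul_rEdge_mem,
    conj_uEdge_mem_of_face Bmove_mem Bmove_eq_edge_mul_corner bEdge_mul_uEdge_mem
      uEdge_mul_bEdge_mem,
    conj_uEdge_mem_of_face Dmove_mem Dmove_eq_edge_mul_corner dEdge_mul_uEdge_mem
      uEdge_mul_dEdge_mem⟩

theorem mem_or_mul_uEdge_mem_of_mem_bigGroup {h : Perm (Fin 48)} (hh : h ∈ bigGroup) :
    h ∈ cubeGroup ∨ h * ofSubtype uEdge ∈ cubeGroup := by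
  let N := cubeGroup.unionCoset (ofSubtype uEdge) uEdge_mul_uEdge_mem fun _ => conj_uEdge_mem
  have corner_mem {X : Perm (Fin 48)} {σ : Perm {x : Fin 48 // (x : ℕ) < 24}}
      {τ : Perm {x : Fin 48 // 24 ≤ (x : ℕ)}} (hX : X ∈ cubeGroup)
      (hXστ : X = ofSubtype σ * ofSubtype τ) (hσu : ofSubtype σ * ofSubtype uEdge ∈ cubeGroup) :
      ofSubtype τ ∈ N := by
    rw [show ofSubtype τ = (ofSubtype σ)⁻¹ * X by rw [hXστ, inv_mul_cancel_left]]
    exact N.mul_mem (N.inv_mem (Or.inr hσu)) (Or.inl hX)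
  suffices bigGroup ≤ N from this hh
  refine (Subgroup.closure_le _).mpr ?_
  simp only [Set.insert_subset_iff, Set.singleton_subset_iff, SetLike.mem_coe]
  exact ⟨Or.inr uEdge_mul_uEdge_mem, Or.inr lEdge_mul_uEdge_mem, Or.inr fEdge_mul_uEdge_mem,
    Or.inr rEdge_mul_uEdge_mem, Or.inr bEdge_mul_uEdge_mem, Or.inr dEdge_mul_uEdge_mem,
    corner_mem Umove_mem Umove_eq_edge_mul_corner uEdge_mul_uEdge_mem,
    corner_mem Lmove_mem Lmove_eq_edge_mul_corner lEdge_mul_uEdge_mem,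
    corner_mem Fmove_mem Fmove_eq_edge_mul_corner fEdge_mul_uEdge_mem,
    corner_mem Rmove_mem Rmove_eq_edge_mul_corner rEdge_mul_uEdge_mem,
    corner_mem Bmove_mem Bmove_eq_edge_mul_corner bEdge_mul_uEdge_mem,
    corner_mem Dmove_mem Dmove_eq_edge_mul_corner dEdge_mul_uEdge_mem⟩

theorem edgeGroupExt_inf_cornerGroupExt : edgeGroupExt ⊓ cornerGroupExt = ⊥ :=
  eq_bot_iff.mpr <| (inf_le_inf (Subgroup.map_le_range _ _) (Subgroup.map_le_range _ _)).trans
    (range_ofSubtype_inf_eq_bot fun _ => Nat.not_le_of_lt).le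

theorem commute_of_mem_edgeGroupExt_of_mem_cornerGroupExt {x y : Perm (Fin 48)}
    (hx : x ∈ edgeGroupExt) (hy : y ∈ cornerGroupExt) : Commute x y := by
  obtain ⟨σ, -, rfl⟩ := hx
  obtain ⟨τ, -, rfl⟩ := hy
  exact edge_commute_corner σ τ

theorem relIndex_cubeGroup_bigGroup : cubeGroup.relIndex bigGroup = 2 :=
  Subgroup.relIndex_eq_two_iff_exists_notMem_and.mpr ⟨ofSubtype uEdge,
    Subgroup.subset_closure (by simp), uEdge_notMem_cubeGroup,
    fun _ hb => (mem_or_mul_uEdge_mem_of_mem_bigGroup hb).symm⟩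

/-- The group generated by the twelve restricted permutations is the
internal direct product of the edge group and the corner group, it has order exactly twice
the order of the cube group, and the cube group is a subgroup of index 2 in it. -/
theorem bigGroup_direct_product :
    bigGroup = edgeGroupExt ⊔ cornerGroupExt ∧
    edgeGroupExt ⊓ cornerGroupExt = ⊥ ∧
    (∀ x ∈ edgeGroupExt, ∀ y ∈ cornerGroupExt, Commute x y) ∧
    Nat.card bigGroup = 2 * Nat.card cubeGroup ∧
    cubeGroup ≤ bigGroup ∧
    cubeGroup.relIndex bigGroup = 2 := by
  have hcard : Nat.card bigGroup = 2 * Nat.card cubeGroup := by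
    rw [← Subgroup.relIndex_bot_left, ← Subgroup.relIndex_bot_left, ← relIndex_cubeGroup_bigGroup,
      mul_comm]
    exact (Subgroup.relIndex_mul_relIndex _ _ _ bot_le cubeGroup_le_bigGroup).symm
  exact ⟨bigGroup_eq_sup, edgeGroupExt_inf_cornerGroupExt,
    fun _ hx _ hy => commute_of_mem_edgeGroupExt_of_mem_cornerGroupExt hx hy, hcard,
    cubeGroup_le_bigGroup, relIndex_cubeGroup_bigGroup⟩
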